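/- arXiv:1712.02298 — 3 statements merged into one kernel-verified Lean document; each statement's English description precedes it below -/
import Mathlib

section
/- Let 1 < ν ≤ 2 and φ(x) = (1 + |x|²)^{ν/2} − 1 on ℝⁿ. Then there exists K = K(ν) > 0 such that for all x, y ∈ ℝⁿ, |x − y|² / (1 + |x|^{2−ν} + |y|^{2−ν}) ≤ (1/K) (∇φ(x) − ∇φ(y)) · (x − y). -/
/-!
Write `∇φ(x) = w(‖x‖) x` with `w(r) = ν (1 + r²)^(ν/2 - 1)`. Both `‖x - y‖²` and
`⟪∇φ x - ∇φ y, x - y⟫` are affine in `⟪x, y⟫ ∈ [-‖x‖ ‖y‖, ‖x‖ ‖y‖]`, so it suffices to treat the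
endpoints, which are the one-dimensional inequality for `h(s) = w(s) s` at `(‖x‖, ±‖y‖)`.
In one dimension `h'(u) = ν (1 + u²)^(ν/2 - 2) (1 + (ν - 1) u²) ≥ ν (ν - 1) (1 + u²)^(ν/2 - 1)`,
and for `M = max |s| |t|` subadditivity of `r ↦ r^(1 - ν/2)` gives
`(1 + M²)^(1 - ν/2) ≤ 1 + M^(2 - ν)`; together they yield the inequality with `K = ν (ν - 1)`.
-/

open scoped RealInnerProductSpace

noncomputable def gradWeight (ν r : ℝ) : ℝ := ν * (1 + r ^ 2) ^ (ν / 2 - 1)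

lemma gradWeight_neg (ν r : ℝ) : gradWeight ν (-r) = gradWeight ν r := by
  simp only [gradWeight, neg_sq]

lemma hasDerivAt_gradWeight_mul_self (ν u : ℝ) :
    HasDerivAt (fun u => gradWeight ν u * u)
      (ν * (1 + u ^ 2) ^ (ν / 2 - 1) * (1 + (ν - 1) * u ^ 2) / (1 + u ^ 2)) u := by
  have hpos : 0 < 1 + u ^ 2 := by positivity
  refine HasDerivAt.congr_deriv (f := fun u => gradWeight ν u * u)
    (((((hasDerivAt_pow 2 u).const_add 1).rpow_const (p := ν / 2 - 1)
      (Or.inl hpos.ne')).const_mul ν).mul (hasDerivAt_id u)) ?_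
  rw [Real.rpow_sub_one hpos.ne']
  field_simp
  ring

lemma le_deriv_gradWeight_mul_self {ν : ℝ} (hν1 : 1 ≤ ν) (hν2 : ν ≤ 2) (u : ℝ) :
    ν * (ν - 1) * (1 + u ^ 2) ^ (ν / 2 - 1) ≤ deriv (fun u => gradWeight ν u * u) u := by
  have hpos : 0 < 1 + u ^ 2 := by positivity
  rw [(hasDerivAt_gradWeight_mul_self ν u).deriv, le_div_iff₀ hpos]
  have hw : 0 ≤ ν * (1 + u ^ 2) ^ (ν / 2 - 1) := by positivity
  have h : (ν - 1) * (1 + u ^ 2) ≤ 1 + (ν - 1) * u ^ 2 := by nlinarith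
  nlinarith [mul_le_mul_of_nonneg_left h hw]

lemma mul_sub_le_gradWeight_mul_self_sub {ν M s t : ℝ} (hν1 : 1 ≤ ν) (hν2 : ν ≤ 2)
    (hs : |s| ≤ M) (ht : |t| ≤ M) (hts : t ≤ s) :
    ν * (ν - 1) * (1 + M ^ 2) ^ (ν / 2 - 1) * (s - t) ≤
      gradWeight ν s * s - gradWeight ν t * t := by
  have hdiff (u : ℝ) := (hasDerivAt_gradWeight_mul_self ν u).differentiableAt
  refine (convex_Icc (-M) M).mul_sub_le_image_sub_of_le_deriv
    (fun u _ => (hdiff u).continuousAt.continuousWithinAt)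
    (fun u _ => (hdiff u).differentiableWithinAt) (fun u hu => ?_)
    t (abs_le.mp ht) s (abs_le.mp hs) hts
  rw [interior_Icc] at hu
  have huM : u ^ 2 ≤ M ^ 2 := sq_le_sq' hu.1.le hu.2.le
  exact (mul_le_mul_of_nonneg_left
    (Real.rpow_le_rpow_of_nonpos (by positivity) (by linarith) (by linarith)) (by nlinarith)).trans
    (le_deriv_gradWeight_mul_self hν1 hν2 u)

lemma one_le_one_add_sq_rpow_mul {ν M : ℝ} (hν0 : 0 ≤ ν) (hν2 : ν ≤ 2) (hM : 0 ≤ M) :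
    1 ≤ (1 + M ^ 2) ^ (ν / 2 - 1) * (1 + M ^ (2 - ν)) := by
  have hpos : 0 < 1 + M ^ 2 := by positivity
  have hsub : (1 + M ^ 2) ^ (1 - ν / 2) ≤ 1 + M ^ (2 - ν) := by
    have h := Real.rpow_add_le_add_rpow zero_le_one (sq_nonneg M) (p := 1 - ν / 2)
      (by linarith) (by linarith)
    rwa [Real.one_rpow, ← Real.rpow_natCast_mul hM, Nat.cast_ofNat,
      show 2 * (1 - ν / 2) = 2 - ν by ring] at h
  rw [show ν / 2 - 1 = -(1 - ν / 2) by ring, Real.rpow_neg hpos.le, inv_mul_eq_div,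
    one_le_div (by positivity)]
  exact hsub

lemma mul_sq_sub_le_gradWeight_mul_self_sub_mul {ν : ℝ} (hν1 : 1 ≤ ν) (hν2 : ν ≤ 2)
    (s t : ℝ) :
    ν * (ν - 1) * (s - t) ^ 2 ≤
      (1 + |s| ^ (2 - ν) + |t| ^ (2 - ν)) *
        ((gradWeight ν s * s - gradWeight ν t * t) * (s - t)) := by
  wlog hts : t ≤ s generalizing s t
  · have h := this t s (le_of_not_ge hts)
    linarith
  set M := max |s| |t|
  have hM : 0 ≤ M := (abs_nonneg s).trans (le_max_left _ _)
  have hmono := mul_sub_le_gradWeight_mul_self_sub hν1 hν2 (le_max_left _ _)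
    (le_max_right _ _) hts
  have hD : 1 + M ^ (2 - ν) ≤ 1 + |s| ^ (2 - ν) + |t| ^ (2 - ν) := by
    rcases max_cases |s| |t| with ⟨h, _⟩ | ⟨h, _⟩ <;> simp only [M, h] <;> linarith
      [Real.rpow_nonneg (abs_nonneg s) (2 - ν), Real.rpow_nonneg (abs_nonneg t) (2 - ν)]
  have hst : 0 ≤ s - t := sub_nonneg.mpr hts
  have hK : 0 ≤ ν * (ν - 1) := by nlinarith
  have hw : 0 ≤ (1 + M ^ 2) ^ (ν / 2 - 1) := by positivity
  calc ν * (ν - 1) * (s - t) ^ 2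
      ≤ (1 + M ^ (2 - ν)) * (ν * (ν - 1) * (1 + M ^ 2) ^ (ν / 2 - 1) * (s - t) * (s - t)) := by
        have h := mul_le_mul_of_nonneg_left
          (one_le_one_add_sq_rpow_mul (by linarith) hν2 hM) (mul_nonneg hK (sq_nonneg (s - t)))
        linarith
    _ ≤ (1 + M ^ (2 - ν)) * ((gradWeight ν s * s - gradWeight ν t * t) * (s - t)) :=
        mul_le_mul_of_nonneg_left (mul_le_mul_of_nonneg_right hmono hst) (by positivity)
    _ ≤ _ := by
        gcongr
        exact mul_nonneg ((mul_nonneg (mul_nonneg hK hw) hst).trans hmono) hst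

lemma add_mul_nonneg_of_abs_le {A B r c : ℝ} (hc : |c| ≤ r) (h₁ : 0 ≤ A - B * r)
    (h₂ : 0 ≤ A + B * r) : 0 ≤ A + B * c := by
  obtain ⟨hc₁, hc₂⟩ := abs_le.mp hc
  rcases le_total 0 B with hB | hB <;> nlinarith

theorem mul_norm_sub_sq_le_mul_inner_gradWeight_sub {E : Type*} [NormedAddCommGroup E]
    [InnerProductSpace ℝ E] {ν : ℝ} (hν1 : 1 ≤ ν) (hν2 : ν ≤ 2) (x y : E) :
    ν * (ν - 1) * ‖x - y‖ ^ 2 ≤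
      (1 + ‖x‖ ^ (2 - ν) + ‖y‖ ^ (2 - ν)) *
        ⟪gradWeight ν ‖x‖ • x - gradWeight ν ‖y‖ • y, x - y⟫ := by
  have hinner : ⟪gradWeight ν ‖x‖ • x - gradWeight ν ‖y‖ • y, x - y⟫ =
      gradWeight ν ‖x‖ * ‖x‖ ^ 2 - (gradWeight ν ‖x‖ + gradWeight ν ‖y‖) * ⟪x, y⟫ +
        gradWeight ν ‖y‖ * ‖y‖ ^ 2 := by
    simp only [inner_sub_left, inner_sub_right, real_inner_smul_left, real_inner_self_eq_norm_sq,
      real_inner_comm y x]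
    ring
  have hplus := mul_sq_sub_le_gradWeight_mul_self_sub_mul hν1 hν2 ‖x‖ ‖y‖
  have hminus := mul_sq_sub_le_gradWeight_mul_self_sub_mul hν1 hν2 ‖x‖ (-‖y‖)
  rw [abs_norm, abs_norm] at hplus
  rw [abs_norm, abs_neg, abs_norm, gradWeight_neg] at hminus
  rw [norm_sub_sq_real, hinner]
  have hc := abs_real_inner_le_norm x y
  generalize ‖x‖ = a at *
  generalize ‖y‖ = b at *
  generalize ⟪x, y⟫ = c at *
  have := add_mul_nonneg_of_abs_le hc
    (A := (1 + a ^ (2 - ν) + b ^ (2 - ν)) * (gradWeight ν a * a ^ 2 + gradWeight ν b * b ^ 2)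
      - ν * (ν - 1) * (a ^ 2 + b ^ 2))
    (B := 2 * ν * (ν - 1) - (1 + a ^ (2 - ν) + b ^ (2 - ν)) * (gradWeight ν a + gradWeight ν b))
    (by linear_combination hminus) (by linear_combination hplus)
  linear_combination this

/-- For `1 < ν ≤ 2` and `φ(x) = (1+|x|²)^{ν/2} − 1` with gradient
`∇φ(x) = ν (1+|x|²)^{ν/2−1} x`, there exists `K = K(ν) > 0` such that
`|x−y|²/(1+|x|^{2−ν}+|y|^{2−ν}) ≤ (1/K) (∇φ(x)−∇φ(y))·(x−y)` for all `x, y`. -/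
theorem stmt5 (n : ℕ) (ν : ℝ) (hν1 : 1 < ν) (hν2 : ν ≤ 2)
    (gradφ : EuclideanSpace ℝ (Fin n) → EuclideanSpace ℝ (Fin n))
    (hgrad : ∀ x, gradφ x = (ν * (1 + ‖x‖ ^ 2) ^ (ν / 2 - 1)) • x) :
    ∃ K : ℝ, 0 < K ∧ ∀ x y : EuclideanSpace ℝ (Fin n),
      ‖x - y‖ ^ 2 / (1 + ‖x‖ ^ (2 - ν) + ‖y‖ ^ (2 - ν)) ≤
        (1 / K) * ⟪gradφ x - gradφ y, x - y⟫ := by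
  have hK : 0 < ν * (ν - 1) := mul_pos (by linarith) (by linarith)
  refine ⟨ν * (ν - 1), hK, fun x y => ?_⟩
  have hgrad' : ∀ x, gradφ x = gradWeight ν ‖x‖ • x := hgrad
  rw [hgrad', hgrad', one_div_mul_eq_div, div_le_div_iff₀ (by positivity) hK]
  linarith [mul_norm_sub_sq_le_mul_inner_gradWeight_sub hν1.le hν2 x y]
end

section
/- Let n ≥ 2, 0 < β < 1, 1 < α ≤ 2, 1 < γ ≤ n and p_c = n/(α+γ−2). Suppose a nonnegative mild solution ρ(·,t) with conserved mass M = ∫ρ₀ dx satisfies the moment differential inequality D^β ω(t) ≤ C₀ M − C₁ M^{2p} / (M² + 2M ω(t))^{p−1} with p > 1, C₀, C₁ > 0, where ω(t) = ∫ φ(x) ρ(x,t) dx ≥ 0. If C₂ := C₀M − C₁ M^{2p}/(M² + 2Mω(0))^{p−1} < 0, then ω(t) < ω(0) + C₂ t^β / Γ(β) for all t in the interval of existence, and hence ω reaches zero in finite time, forcing finite-time blowup whenever M > 0. -/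
/-!
The right-hand side `R(y) = C₀M − C₁M^{2p}/(M² + 2My)^{p−1}` is increasing in `y` and
`R(ω 0) = C₂ < 0`, so by continuity `R < 0` up to some level `y > ω 0`. As long as `ω < y`
the Caputo derivative of `ω` is nonpositive, hence `ω ≤ ω 0`; so `ω` can never reach
`y`, and in fact `ω ≤ ω 0` throughout. Then `D^β ω ≤ R(ω) ≤ C₂`, and integrating the constant
gives `ω t ≤ ω 0 + C₂ t^β / Γ(β + 1)`, which is strictly below the claimed bound because
`Γ(β + 1) = β Γ(β) < Γ(β)` and `C₂ < 0`.
-/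

open MeasureTheory intervalIntegral Set Filter

noncomputable def riemannLiouville (β : ℝ) (f : ℝ → ℝ) (t : ℝ) : ℝ :=
  (1 / Real.Gamma β) * ∫ s in (0 : ℝ)..t, (t - s) ^ (β - 1) * f s

lemma ContinuousWithinAt.le_of_ae_Ioo_le {u v : ℝ → ℝ} {a t : ℝ} (hat : a < t)
    (hu : ContinuousWithinAt u (Ioo a t) t) (hv : ContinuousWithinAt v (Ioo a t) t)
    (h : ∀ᵐ s, s ∈ Ioo a t → u s ≤ v s) : u t ≤ v t := by
  set D := Ioo a t ∩ {s | s ∈ Ioo a t → u s ≤ v s}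
  have ht : t ∈ closure D := by
    have hIoo : Ioo a t ⊆ closure D := (volume.dense_of_ae h).open_subset_closure_inter isOpen_Ioo
    have : t ∈ closure (Ioo a t) := by rw [closure_Ioo hat.ne]; exact right_mem_Icc.2 hat.le
    exact closure_minimal hIoo isClosed_closure this
  exact ContinuousWithinAt.closure_le ht (hu.mono inter_subset_left) (hv.mono inter_subset_left)
    fun s hs => hs.2 hs.1

lemma intervalIntegrable_sub_rpow {β : ℝ} (hβ : 0 < β) (t : ℝ) :
    IntervalIntegrable (fun s => (t - s) ^ (β - 1)) volume 0 t := by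
  simpa using
    (intervalIntegrable_rpow' (a := t) (b := 0) (r := β - 1) (by linarith)).comp_sub_left t

lemma integral_sub_rpow {β : ℝ} (hβ : 0 < β) (t : ℝ) :
    ∫ s in (0 : ℝ)..t, (t - s) ^ (β - 1) = t ^ β / β := by
  rw [integral_comp_sub_left (fun u => u ^ (β - 1)) t, sub_self, sub_zero,
    integral_rpow (Or.inl (by linarith)), sub_add_cancel, Real.zero_rpow hβ.ne', sub_zero]

lemma ae_intervalIntegrable_sub_rpow_mul {β T : ℝ} {f : ℝ → ℝ} (hβ : 0 < β)
    (hf : IntegrableOn f (Icc 0 T)) :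
    ∀ᵐ t, t ∈ Ioc 0 T →
      IntervalIntegrable (fun s => (t - s) ^ (β - 1) * f s) volume 0 t := by
  set k : ℝ → ℝ := (Ioc 0 T).indicator fun u => u ^ (β - 1)
  have hk : Integrable k := by
    refine (integrable_indicator_iff measurableSet_Ioc).2 ?_
    exact (intervalIntegrable_iff.1
      (intervalIntegrable_rpow' (a := 0) (b := T) (by linarith))).mono_set Ioc_subset_uIoc
  filter_upwards [((integrable_indicator_iff measurableSet_Icc).2 hf).ae_convolution_exists
    (L := ContinuousLinearMap.mul ℝ ℝ) hk] with t hconv ht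
  rw [intervalIntegrable_iff_integrableOn_Ioo_of_le ht.1.le]
  refine hconv.integrableOn.congr_fun (fun s hs => ?_) measurableSet_Ioo
  have hs₁ : s ∈ Icc 0 T := ⟨hs.1.le, hs.2.le.trans ht.2⟩
  have hs₂ : t - s ∈ Ioc 0 T := ⟨by linarith [hs.2], by linarith [hs.1, ht.2]⟩
  simp only [k, indicator_of_mem hs₁, indicator_of_mem hs₂, ContinuousLinearMap.mul_apply']
  ring

lemma riemannLiouville_le {β t K : ℝ} {f : ℝ → ℝ} (hβ : 0 < β) (ht : 0 ≤ t)
    (hi : IntervalIntegrable (fun s => (t - s) ^ (β - 1) * f s) volume 0 t)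
    (hK : ∀ s ∈ Ioo 0 t, f s ≤ K) :
    riemannLiouville β f t ≤ K * t ^ β / Real.Gamma (β + 1) := by
  have hint : ∫ s in (0 : ℝ)..t, (t - s) ^ (β - 1) * f s ≤ t ^ β / β * K := by
    rw [← integral_sub_rpow hβ t, ← intervalIntegral.integral_mul_const]
    refine integral_mono_on_of_le_Ioo ht hi ((intervalIntegrable_sub_rpow hβ t).mul_const K)
      fun s hs => mul_le_mul_of_nonneg_left (hK s hs) (Real.rpow_nonneg (by linarith [hs.2]) _)
  have hΓ := Real.Gamma_pos_of_pos hβ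
  calc riemannLiouville β f t ≤ 1 / Real.Gamma β * (t ^ β / β * K) :=
        mul_le_mul_of_nonneg_left hint (by positivity)
    _ = K * t ^ β / Real.Gamma (β + 1) := by
        rw [Real.Gamma_add_one hβ.ne']; field_simp

lemma le_add_of_eq_add_riemannLiouville {β T K t : ℝ} {ω f : ℝ → ℝ} (hβ : 0 < β)
    (hωcont : ContinuousOn ω (Icc 0 T)) (hfint : IntegrableOn f (Icc 0 T))
    (hω : ∀ t ∈ Icc 0 T, ω t = ω 0 + riemannLiouville β f t) (ht : t ∈ Icc 0 T)
    (hK : ∀ s ∈ Ioo 0 t, f s ≤ K) :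
    ω t ≤ ω 0 + K * t ^ β / Real.Gamma (β + 1) := by
  -- The kernel integral at `t` need not exist (and then has the junk value `0`): the bound holds
  -- at the almost every `s < t` where it does, and passes to `t` by continuity of `ω`.
  rcases ht.1.eq_or_lt with rfl | htpos
  · simp [Real.zero_rpow hβ.ne']
  have hsub : Ioo 0 t ⊆ Icc 0 T := fun s hs => ⟨hs.1.le, hs.2.le.trans ht.2⟩
  have hbound : Continuous fun s => ω 0 + K * s ^ β / Real.Gamma (β + 1) :=
    continuous_const.add ((continuous_const.mul (Real.continuous_rpow_const hβ.le)).div_const _)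
  refine ContinuousWithinAt.le_of_ae_Ioo_le htpos ((hωcont t ht).mono hsub)
    hbound.continuousWithinAt ?_
  filter_upwards [ae_intervalIntegrable_sub_rpow_mul hβ hfint] with s hs hst
  rw [hω s (hsub hst)]
  gcongr
  exact riemannLiouville_le hβ hst.1.le (hs ⟨hst.1, hst.2.le.trans ht.2⟩)
    fun u hu => hK u ⟨hu.1, hu.2.trans hst.2⟩

lemma le_apply_zero_of_eq_add_riemannLiouville {β T y : ℝ} {ω f : ℝ → ℝ} (hβ : 0 < β)
    (hωcont : ContinuousOn ω (Icc 0 T)) (hfint : IntegrableOn f (Icc 0 T))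
    (hω : ∀ t ∈ Icc 0 T, ω t = ω 0 + riemannLiouville β f t) (hy : ω 0 < y)
    (hfy : ∀ t ∈ Icc 0 T, ω t < y → f t ≤ 0) :
    ∀ t ∈ Icc 0 T, ω t ≤ ω 0 := by
  have hle_of_lt (t : ℝ) (ht : t ∈ Icc 0 T) (hlt : ∀ s ∈ Ioo 0 t, ω s < y) :
      ω t ≤ ω 0 := by
    have hsub : Ioo 0 t ⊆ Icc 0 T := fun s hs => ⟨hs.1.le, hs.2.le.trans ht.2⟩
    simpa using le_add_of_eq_add_riemannLiouville hβ hωcont hfint hω ht (K := 0)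
      fun s hs => hfy s (hsub hs) (hlt s hs)
  suffices hlt : ∀ t ∈ Icc 0 T, ω t < y from
    fun t ht => hle_of_lt t ht fun s hs => hlt s ⟨hs.1.le, hs.2.le.trans ht.2⟩
  by_contra! hexit
  set B := Icc 0 T ∩ ω ⁻¹' Ici y
  have hBbdd : BddBelow B := ⟨0, fun s hs => hs.1.1⟩
  have hfirst : sInf B ∈ B :=
    (hωcont.preimage_isClosed_of_isClosed isClosed_Icc isClosed_Ici).csInf_mem hexit hBbdd
  have hbefore (s : ℝ) (hs : s ∈ Ioo 0 (sInf B)) : ω s < y :=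
    lt_of_not_ge fun hsy =>
      (csInf_le hBbdd ⟨⟨hs.1.le, hs.2.le.trans hfirst.1.2⟩, hsy⟩).not_gt hs.2
  linarith [hle_of_lt _ hfirst.1 hbefore, show y ≤ ω (sInf B) from hfirst.2]

noncomputable def momentRHS (C₀ C₁ M p y : ℝ) : ℝ :=
  C₀ * M - C₁ * M ^ (2 * p) / (M ^ 2 + 2 * M * y) ^ (p - 1)

lemma momentRHS_monotoneOn {C₀ C₁ M p : ℝ} (hC₁ : 0 ≤ C₁) (hM : 0 < M) (hp : 1 ≤ p) :
    MonotoneOn (momentRHS C₀ C₁ M p) (Ici 0) := by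
  intro x hx y _ hxy
  have hbase : 0 < M ^ 2 + 2 * M * x := by nlinarith [mem_Ici.1 hx]
  unfold momentRHS
  gcongr

lemma continuousAt_momentRHS {C₀ C₁ M p y : ℝ} (hM : 0 < M) (hy : 0 ≤ y) :
    ContinuousAt (momentRHS C₀ C₁ M p) y := by
  have hbase : 0 < M ^ 2 + 2 * M * y := by nlinarith
  have hpow : ContinuousAt (fun y => (M ^ 2 + 2 * M * y) ^ (p - 1)) y :=
    (continuousAt_const.add (continuousAt_const.mul continuousAt_id)).rpow_const (Or.inl hbase.ne')
  exact continuousAt_const.sub (continuousAt_const.div hpow (Real.rpow_pos_of_pos hbase _).ne')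

lemma Real.Gamma_add_one_lt_Gamma {β : ℝ} (h0 : 0 < β) (h1 : β < 1) :
    Real.Gamma (β + 1) < Real.Gamma β := by
  rw [Real.Gamma_add_one h0.ne']
  nlinarith [Real.Gamma_pos_of_pos h0]

lemma exists_pos_add_mul_rpow_div_nonpos {a c d β : ℝ} (hc : c < 0) (hd : 0 < d) (hβ : 0 < β) :
    ∃ t, 0 < t ∧ a + c * t ^ β / d ≤ 0 := by
  have h : Tendsto (fun t => a + c * t ^ β / d) atTop atBot :=
    tendsto_atBot_add_const_left _ _
      (((tendsto_rpow_atTop hβ).const_mul_atTop_of_neg hc).atBot_div_const hd)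
  exact ((eventually_gt_atTop 0).and (h.eventually_le_atBot 0)).exists

theorem stmt16_general (β : ℝ) (hβ0 : 0 < β) (hβ1 : β < 1)
    (T M p C₀ C₁ : ℝ) (hM : 0 < M) (hp : 1 < p)
    (hC₁ : 0 < C₁)
    (ω f : ℝ → ℝ)
    (hωcont : ContinuousOn ω (Set.Icc 0 T))
    (hωpos : ∀ t ∈ Set.Icc (0 : ℝ) T, 0 ≤ ω t)
    (hfint : IntegrableOn f (Set.Icc 0 T))
    -- the Caputo differential inequality `D^β ω ≤ C₀M − C₁M^{2p}/(M²+2Mω)^{p−1}`,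
    -- in integral form:
    (hf : ∀ t ∈ Set.Icc (0 : ℝ) T,
      f t ≤ C₀ * M - C₁ * M ^ (2 * p) / (M ^ 2 + 2 * M * ω t) ^ (p - 1))
    (hω : ∀ t ∈ Set.Icc (0 : ℝ) T,
      ω t = ω 0 + (1 / Real.Gamma β) * ∫ s in (0 : ℝ)..t, (t - s) ^ (β - 1) * f s)
    (hC₂ : C₀ * M - C₁ * M ^ (2 * p) / (M ^ 2 + 2 * M * ω 0) ^ (p - 1) < 0) :
    (∀ t ∈ Set.Ioc (0 : ℝ) T,
      ω t < ω 0 +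
        (C₀ * M - C₁ * M ^ (2 * p) / (M ^ 2 + 2 * M * ω 0) ^ (p - 1)) *
          t ^ β / Real.Gamma β) ∧
    ∃ t₀ : ℝ, 0 < t₀ ∧
      ω 0 + (C₀ * M - C₁ * M ^ (2 * p) / (M ^ 2 + 2 * M * ω 0) ^ (p - 1)) *
          t₀ ^ β / Real.Gamma β ≤ 0 := by
  change ∀ t ∈ Icc 0 T, f t ≤ momentRHS C₀ C₁ M p (ω t) at hf
  change momentRHS C₀ C₁ M p (ω 0) < 0 at hC₂
  refine ⟨fun t ht => ?_,
    exists_pos_add_mul_rpow_div_nonpos hC₂ (Real.Gamma_pos_of_pos hβ0) hβ0⟩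
  have hω₀ : 0 ≤ ω 0 := hωpos 0 ⟨le_rfl, ht.1.le.trans ht.2⟩
  have hmono := momentRHS_monotoneOn (C₀ := C₀) hC₁.le hM hp.le
  obtain ⟨y, hy, hRy⟩ : ∃ y > ω 0, momentRHS C₀ C₁ M p y < 0 :=
    ((continuousAt_momentRHS hM hω₀).eventually_lt_const hC₂).exists_gt
  have hle : ∀ s ∈ Icc 0 T, ω s ≤ ω 0 :=
    le_apply_zero_of_eq_add_riemannLiouville hβ0 hωcont hfint hω hy fun s hs hsy =>
      (hf s hs).trans ((hmono (hωpos s hs) (hω₀.trans hy.le) hsy.le).trans hRy.le)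
  have hsub : Ioo 0 t ⊆ Icc 0 T := fun s hs => ⟨hs.1.le, hs.2.le.trans ht.2⟩
  calc ω t ≤ ω 0 + momentRHS C₀ C₁ M p (ω 0) * t ^ β / Real.Gamma (β + 1) :=
        le_add_of_eq_add_riemannLiouville hβ0 hωcont hfint hω ⟨ht.1.le, ht.2⟩
          fun s hs => (hf s (hsub hs)).trans (hmono (hωpos s (hsub hs)) hω₀ (hle s (hsub hs)))
    _ < ω 0 + momentRHS C₀ C₁ M p (ω 0) * t ^ β / Real.Gamma β := by
        have hneg : momentRHS C₀ C₁ M p (ω 0) * t ^ β < 0 :=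
          mul_neg_of_neg_of_pos hC₂ (Real.rpow_pos_of_pos ht.1 β)
        have hΓ := div_lt_div_of_pos_left (neg_pos.2 hneg) (Real.Gamma_pos_of_pos (by linarith))
          (Real.Gamma_add_one_lt_Gamma hβ0 hβ1)
        rw [neg_div, neg_div, neg_lt_neg_iff] at hΓ
        linarith

/-- Blowup via the moment method: if the ν-moment `ω ≥ 0` of a nonnegative mass-`M`
solution satisfies the Caputo differential inequality
`D^β ω(t) ≤ C₀ M − C₁ M^{2p}/(M² + 2Mω(t))^{p−1}` (encoded by the integral form with
density `f`), and `C₂ := C₀M − C₁M^{2p}/(M² + 2Mω(0))^{p−1} < 0`, then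
`ω(t) < ω(0) + C₂ t^β/Γ(β)` on the interval of existence; since `C₂ < 0` the bound
reaches zero in finite time, forcing finite-time blowup. -/
theorem stmt16 (n : ℕ) (hn : 2 ≤ n) (β α γ : ℝ) (hβ0 : 0 < β) (hβ1 : β < 1)
    (hα1 : 1 < α) (hα2 : α ≤ 2) (hγ1 : 1 < γ) (hγn : γ ≤ n)
    (T M p C₀ C₁ : ℝ) (hT : 0 < T) (hM : 0 < M) (hp : 1 < p)
    (hC₀ : 0 < C₀) (hC₁ : 0 < C₁)
    (ω f : ℝ → ℝ)
    (hωcont : ContinuousOn ω (Set.Icc 0 T))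
    (hωpos : ∀ t ∈ Set.Icc (0 : ℝ) T, 0 ≤ ω t)
    (hfint : IntegrableOn f (Set.Icc 0 T))
    -- the Caputo differential inequality `D^β ω ≤ C₀M − C₁M^{2p}/(M²+2Mω)^{p−1}`,
    -- in integral form:
    (hf : ∀ t ∈ Set.Icc (0 : ℝ) T,
      f t ≤ C₀ * M - C₁ * M ^ (2 * p) / (M ^ 2 + 2 * M * ω t) ^ (p - 1))
    (hω : ∀ t ∈ Set.Icc (0 : ℝ) T,
      ω t = ω 0 + (1 / Real.Gamma β) * ∫ s in (0 : ℝ)..t, (t - s) ^ (β - 1) * f s)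
    (hC₂ : C₀ * M - C₁ * M ^ (2 * p) / (M ^ 2 + 2 * M * ω 0) ^ (p - 1) < 0) :
    (∀ t ∈ Set.Ioc (0 : ℝ) T,
      ω t < ω 0 +
        (C₀ * M - C₁ * M ^ (2 * p) / (M ^ 2 + 2 * M * ω 0) ^ (p - 1)) *
          t ^ β / Real.Gamma β) ∧
    ∃ t₀ : ℝ, 0 < t₀ ∧
      ω 0 + (C₀ * M - C₁ * M ^ (2 * p) / (M ^ 2 + 2 * M * ω 0) ^ (p - 1)) *
          t₀ ^ β / Real.Gamma β ≤ 0 :=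
  stmt16_general β hβ0 hβ1 T M p C₀ C₁ hM hp hC₁ ω f hωcont hωpos hfint hf hω hC₂
end

section
/- Let 0 < β < 1 and σ ∈ [0, α] with 1 < α ≤ 2. Assume the bound |E_β(−s)| ≤ C/(1+s) for s ≥ 0. Then for u ∈ L²(ℝⁿ) and t > 0, the operator S(t) defined by (S(t)u)^(ξ) = E_β(−t^β|ξ|^α) û(ξ) satisfies ‖S(t)u‖_{H^{σ,2}}² = ∫ (1+|ξ|^{2σ}) E_β(−t^β|ξ|^α)² |û(ξ)|² dξ ≤ C t^{−2σβ/α} ‖u‖₂² for 0 < t ≤ T. -/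
/-!
By Plancherel, the left-hand side is `∫ w |û|²` with `w ξ = (1 + |ξ|^{2σ}) E_β(-t^β|ξ|^α)²`, so it
suffices to bound `w` uniformly by `C' t^{-2σβ/α}`. Writing `s = t^β|ξ|^α`, one has
`|ξ|^{2σ} = s^{2σ/α} t^{-2σβ/α}`, and `s^{2σ/α} ≤ (1 + s)²` (as `2σ/α ≤ 2`) is absorbed by the decay
`E_β(-s)² ≤ C²/(1 + s)²`; the remaining term satisfies `E_β² ≤ C² ≤ C² T^{2σβ/α} t^{-2σβ/α}`.

Plancherel for `u ∈ L¹ ∩ L²` follows by testing the `L²` Fourier transform against Schwartz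
functions. For `u ∉ L¹` the Fourier integral is the junk value `0` and the bound is trivial.
-/

open MeasureTheory FourierTransform

/-- The one-parameter Mittag-Leffler function `E_β(z) = Σ z^k / Γ(kβ + 1)`. -/
noncomputable def mittagLeffler (β z : ℝ) : ℝ :=
  ∑' k : ℕ, z ^ k / Real.Gamma (k * β + 1)

theorem Real.rpow_le_one_add_sq {s p : ℝ} (hs : 0 ≤ s) (hp₀ : 0 ≤ p) (hp₂ : p ≤ 2) :
    s ^ p ≤ (1 + s) ^ 2 := calc
  s ^ p ≤ (1 + s) ^ p := Real.rpow_le_rpow hs (by linarith) hp₀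
  _ ≤ (1 + s) ^ (2 : ℝ) := Real.rpow_le_rpow_of_exponent_le (by linarith) hp₂
  _ = (1 + s) ^ 2 := Real.rpow_two _

section DecayingMultiplier

variable {m : ℝ → ℝ} {C : ℝ}

theorem sq_le_sq_div_one_add_sq (hm : ∀ s, 0 ≤ s → |m s| ≤ C / (1 + s)) {s : ℝ} (hs : 0 ≤ s) :
    m s ^ 2 ≤ C ^ 2 / (1 + s) ^ 2 := by
  rw [← sq_abs, ← div_pow]
  exact pow_le_pow_left₀ (abs_nonneg _) (hm s hs) 2

theorem sq_le_mul_rpow_mul_rpow_neg (hm : ∀ s, 0 ≤ s → |m s| ≤ C / (1 + s)) {s t T ε : ℝ}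
    (hs : 0 ≤ s) (ht : 0 < t) (htT : t ≤ T) (hε : 0 ≤ ε) :
    m s ^ 2 ≤ C ^ 2 * T ^ ε * t ^ (-ε) := by
  have hTt : 1 ≤ T ^ ε * t ^ (-ε) := by
    rw [Real.rpow_neg ht.le, ← div_eq_mul_inv, one_le_div (by positivity)]
    exact Real.rpow_le_rpow ht.le htT hε
  calc m s ^ 2 ≤ C ^ 2 / (1 + s) ^ 2 := sq_le_sq_div_one_add_sq hm hs
    _ ≤ C ^ 2 := div_le_self (sq_nonneg C) (one_le_pow₀ (by linarith))
    _ ≤ C ^ 2 * (T ^ ε * t ^ (-ε)) := le_mul_of_one_le_right (sq_nonneg C) hTt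
    _ = C ^ 2 * T ^ ε * t ^ (-ε) := by ring

theorem rpow_mul_sq_le (hm : ∀ s, 0 ≤ s → |m s| ≤ C / (1 + s)) {r t α β σ : ℝ} (hr : 0 ≤ r)
    (ht : 0 < t) (hα : 0 < α) (hσ₀ : 0 ≤ σ) (hσα : σ ≤ α) :
    r ^ (2 * σ) * m (t ^ β * r ^ α) ^ 2 ≤ C ^ 2 * t ^ (-(2 * σ * β) / α) := by
  set s := t ^ β * r ^ α
  have hs : 0 ≤ s := by positivity
  have hscale : r ^ (2 * σ) = s ^ (2 * σ / α) * t ^ (-(2 * σ * β) / α) := by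
    rw [Real.mul_rpow (by positivity) (by positivity), ← Real.rpow_mul ht.le, ← Real.rpow_mul hr,
      mul_right_comm, ← Real.rpow_add ht, mul_div_cancel₀ _ hα.ne',
      show β * (2 * σ / α) + -(2 * σ * β) / α = 0 by ring, Real.rpow_zero, one_mul]
  have hs_pow : s ^ (2 * σ / α) ≤ (1 + s) ^ 2 :=
    Real.rpow_le_one_add_sq hs (by positivity) (by rw [div_le_iff₀ hα]; linarith)
  calc r ^ (2 * σ) * m s ^ 2
      = s ^ (2 * σ / α) * t ^ (-(2 * σ * β) / α) * m s ^ 2 := by rw [hscale]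
    _ ≤ (1 + s) ^ 2 * t ^ (-(2 * σ * β) / α) * (C ^ 2 / (1 + s) ^ 2) := by
        gcongr
        exact sq_le_sq_div_one_add_sq hm hs
    _ = C ^ 2 * t ^ (-(2 * σ * β) / α) := by field_simp

theorem one_add_rpow_mul_sq_le (hm : ∀ s, 0 ≤ s → |m s| ≤ C / (1 + s)) {r t T α β σ : ℝ}
    (hr : 0 ≤ r) (ht : 0 < t) (htT : t ≤ T) (hα : 0 < α) (hβ : 0 ≤ β) (hσ₀ : 0 ≤ σ)
    (hσα : σ ≤ α) :
    (1 + r ^ (2 * σ)) * m (t ^ β * r ^ α) ^ 2 ≤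
      C ^ 2 * (T ^ (2 * σ * β / α) + 1) * t ^ (-(2 * σ * β) / α) := by
  have hmultiplier :
      m (t ^ β * r ^ α) ^ 2 ≤ C ^ 2 * T ^ (2 * σ * β / α) * t ^ (-(2 * σ * β) / α) := by
    rw [neg_div]
    exact sq_le_mul_rpow_mul_rpow_neg hm (by positivity) ht htT (by positivity)
  have hdecay := rpow_mul_sq_le hm hr ht hα hσ₀ hσα (β := β)
  linarith

end DecayingMultiplier

theorem MeasureTheory.Lp.integral_norm_sq_eq_norm_sq {α 𝕜 E : Type*} [MeasurableSpace α]
    {μ : Measure α} [RCLike 𝕜] [NormedAddCommGroup E] [InnerProductSpace 𝕜 E]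
    (h : Lp E 2 μ) : ∫ x, ‖h x‖ ^ 2 ∂μ = ‖h‖ ^ 2 := by
  rw [@norm_sq_eq_re_inner 𝕜, L2.inner_def, ← integral_re (L2.integrable_inner h h)]
  simp [inner_self_eq_norm_sq_to_K]

section Fourier

variable {V : Type*} [NormedAddCommGroup V] [InnerProductSpace ℝ V] [FiniteDimensional ℝ V]
  [MeasurableSpace V] [BorelSpace V]

theorem fourier_ae_eq_fourier_toLp {f : V → ℂ} (hf₁ : Integrable f) (hf₂ : MemLp f 2) :
    𝓕 f =ᵐ[volume] ⇑(𝓕 (hf₂.toLp f) : Lp ℂ 2 (volume : Measure V)) := by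
  have hcont : Continuous (𝓕 f) :=
    VectorFourier.fourierIntegral_continuous Real.continuous_fourierChar continuous_inner hf₁
  refine ae_eq_of_integral_contDiff_smul_eq hcont.locallyIntegrable
    ((Lp.memLp _).locallyIntegrable (p := 2) (by norm_num)) fun g hg_smooth hg_supp => ?_
  let φ : SchwartzMap V ℂ := (hg_supp.comp_left (g := Complex.ofRealCLM) rfl).toSchwartzMap
    (by fun_prop)
  have hself_adjoint : ∫ ξ, 𝓕 f ξ * φ ξ = ∫ x, f x * 𝓕 φ x := by
    simpa [real_inner_comm] using! VectorFourier.integral_fourierIntegral_smul_eq_flip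
      (L := innerₗ V) (μ := volume) (ν := volume)
      Real.continuous_fourierChar continuous_inner hf₁ φ.integrable
  have hdistrib := congrArg (fun T => T φ) (Lp.fourier_toTemperedDistribution_eq (hf₂.toLp f))
  simp only [TemperedDistribution.fourier_apply, Lp.toTemperedDistribution_apply,
    smul_eq_mul] at hdistrib
  calc ∫ x, g x • 𝓕 f x = ∫ x, 𝓕 f x * φ x := by simp [φ, mul_comm]
    _ = ∫ x, 𝓕 φ x * hf₂.toLp f x := by
      rw [hself_adjoint]
      refine integral_congr_ae ?_
      filter_upwards [hf₂.coeFn_toLp] with x hx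
      rw [hx, mul_comm]
    _ = ∫ x, g x • (𝓕 (hf₂.toLp f) : Lp ℂ 2 (volume : Measure V)) x := hdistrib

theorem memLp_two_fourier {f : V → ℂ} (hf₁ : Integrable f) (hf₂ : MemLp f 2) :
    MemLp (𝓕 f) 2 :=
  (Lp.memLp _).ae_eq (fourier_ae_eq_fourier_toLp hf₁ hf₂).symm

theorem integral_norm_sq_fourier_eq {f : V → ℂ} (hf₁ : Integrable f) (hf₂ : MemLp f 2) :
    ∫ ξ, ‖𝓕 f ξ‖ ^ 2 = ∫ x, ‖f x‖ ^ 2 := calc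
  ∫ ξ, ‖𝓕 f ξ‖ ^ 2 = ∫ ξ, ‖(𝓕 (hf₂.toLp f) : Lp ℂ 2 (volume : Measure V)) ξ‖ ^ 2 :=
      integral_congr_ae <| by
        filter_upwards [fourier_ae_eq_fourier_toLp hf₁ hf₂] with ξ hξ
        rw [hξ]
  _ = ∫ x, ‖hf₂.toLp f x‖ ^ 2 := by
      rw [Lp.integral_norm_sq_eq_norm_sq (𝕜 := ℂ), Lp.integral_norm_sq_eq_norm_sq (𝕜 := ℂ),
        Lp.norm_fourier_eq]
  _ = ∫ x, ‖f x‖ ^ 2 := integral_congr_ae <| by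
        filter_upwards [hf₂.coeFn_toLp] with x hx
        rw [hx]

theorem fourier_eq_zero_of_not_integrable {f : V → ℂ} (hf : ¬Integrable f) : 𝓕 f = 0 := by
  ext ξ
  exact integral_undef fun h => hf ((Real.fourierIntegral_convergent_iff ξ).mp h)

theorem integral_mul_norm_fourier_sq_le {f : V → ℂ} (hf : MemLp f 2) {w : V → ℝ} {M : ℝ}
    (hw₀ : ∀ ξ, 0 ≤ w ξ) (hwM : ∀ ξ, w ξ ≤ M) :
    ∫ ξ, w ξ * ‖𝓕 f ξ‖ ^ 2 ≤ M * ∫ x, ‖f x‖ ^ 2 := by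
  by_cases hf₁ : Integrable f
  · calc ∫ ξ, w ξ * ‖𝓕 f ξ‖ ^ 2 ≤ ∫ ξ, M * ‖𝓕 f ξ‖ ^ 2 :=
          integral_mono_of_nonneg (.of_forall fun ξ => by have := hw₀ ξ; positivity)
            (((memLp_two_fourier hf₁ hf).integrable_norm_pow two_ne_zero).const_mul M)
            (.of_forall fun ξ => mul_le_mul_of_nonneg_right (hwM ξ) (by positivity))
      _ = M * ∫ x, ‖f x‖ ^ 2 := by rw [integral_const_mul, integral_norm_sq_fourier_eq hf₁ hf]
  · have hM : 0 ≤ M := (hw₀ 0).trans (hwM 0)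
    simp only [fourier_eq_zero_of_not_integrable hf₁, Pi.zero_apply, norm_zero,
      zero_pow two_ne_zero, mul_zero, integral_zero]
    exact mul_nonneg hM (integral_nonneg fun x => by positivity)

end Fourier

theorem stmt19_general (n : ℕ) (β α σ T C : ℝ) (hβ0 : 0 < β)
    (hα1 : 1 < α) (hσ0 : 0 ≤ σ) (hσα : σ ≤ α)
    (hT : 0 < T) (hC : 0 < C)
    (hE : ∀ s : ℝ, 0 ≤ s → |mittagLeffler β (-s)| ≤ C / (1 + s)) :
    ∃ C' : ℝ, 0 < C' ∧ ∀ (u : EuclideanSpace ℝ (Fin n) → ℝ), MemLp u 2 volume →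
      ∀ t : ℝ, 0 < t → t ≤ T →
        (∫ ξ : EuclideanSpace ℝ (Fin n),
            (1 + ‖ξ‖ ^ (2 * σ)) * mittagLeffler β (-(t ^ β * ‖ξ‖ ^ α)) ^ 2 *
              ‖𝓕 (fun x => (u x : ℂ)) ξ‖ ^ 2) ≤
          C' * t ^ (-(2 * σ * β) / α) * ∫ x, u x ^ 2 := by
  refine ⟨C ^ 2 * (T ^ (2 * σ * β / α) + 1), by positivity, fun u hu t ht htT => ?_⟩
  have hnorm : ∫ x, u x ^ 2 = ∫ x, ‖(u x : ℂ)‖ ^ 2 := by simp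
  rw [hnorm]
  exact integral_mul_norm_fourier_sq_le hu.ofReal (fun ξ => by positivity) fun ξ =>
    one_add_rpow_mul_sq_le (m := fun s => mittagLeffler β (-s)) hE (norm_nonneg ξ) ht htT
      (by linarith) hβ0.le hσ0 hσα

/-- Smoothing estimate for the fractional-in-time, fractional-in-space propagator:
assuming `|E_β(−s)| ≤ C/(1+s)`, the operator with Fourier multiplier
`E_β(−t^β|ξ|^α)` maps `L²` to `H^{σ,2}` with norm `O(t^{−σβ/α})` on `(0,T]`. -/
theorem stmt19 (n : ℕ) (β α σ T C : ℝ) (hβ0 : 0 < β) (hβ1 : β < 1)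
    (hα1 : 1 < α) (hα2 : α ≤ 2) (hσ0 : 0 ≤ σ) (hσα : σ ≤ α)
    (hT : 0 < T) (hC : 0 < C)
    (hE : ∀ s : ℝ, 0 ≤ s → |mittagLeffler β (-s)| ≤ C / (1 + s)) :
    ∃ C' : ℝ, 0 < C' ∧ ∀ (u : EuclideanSpace ℝ (Fin n) → ℝ), MemLp u 2 volume →
      ∀ t : ℝ, 0 < t → t ≤ T →
        (∫ ξ : EuclideanSpace ℝ (Fin n),
            (1 + ‖ξ‖ ^ (2 * σ)) * mittagLeffler β (-(t ^ β * ‖ξ‖ ^ α)) ^ 2 *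
              ‖𝓕 (fun x => (u x : ℂ)) ξ‖ ^ 2) ≤
          C' * t ^ (-(2 * σ * β) / α) * ∫ x, u x ^ 2 :=
  stmt19_general n β α σ T C hβ0 hα1 hσ0 hσα hT hC hE
end
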